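/- Let K be an n×n real symmetric positive definite matrix, α > 0, and for C ⊆ {1,…,n} let Pr(C) = det((K/α)_{CC}) / det(I + K/α). Then for all vectors k_x, y ∈ ℝⁿ, the averaged ridgeless predictor satisfies ∑_{C ⊆ {1,…,n}} Pr(C) · k_xᵀ C K_{CC}^{-1} Cᵀ y = k_xᵀ (K + αI)^{-1} y (with the term for the empty subset equal to 0). -/

import Mathlib

open Matrix BigOperators Finset

/-- The `n × |C|` sampling matrix obtained by selecting the columns of the identity
matrix indexed by `C`. -/
def sampMatrix {n : ℕ} (C : Finset (Fin n)) : Matrix (Fin n) {x // x ∈ C} ℝ :=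
  fun i j => if i = (j : Fin n) then 1 else 0

/-- The principal submatrix `K_{CC}` of `K` with rows and columns indexed by `C`. -/
def principalSub {n : ℕ} (K : Matrix (Fin n) (Fin n) ℝ) (C : Finset (Fin n)) :
    Matrix {x // x ∈ C} {x // x ∈ C} ℝ :=
  fun i j => K i j

/-!
Multilinearity of the determinant in the rows gives the principal-minor expansion
`det (A + diag d) = ∑_C (∏_{k ∉ C} d k) det A_CC`. Since `adj M i j = det (M + E_ji) - det M`,
the same expansion applied to `A + E_ji` expands the adjugate, with the zero-padded `adj A_CC` in
place of `det A_CC`. With `d = α`, dividing by `det (K + αI)` and writing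
`adj K_CC = det K_CC • K_CC⁻¹` turns `(K + αI)⁻¹ = adj / det` into the average of the
subset predictors, the weight `α^|Cᶜ| det K_CC / det (K + αI)` being exactly `Pr(C)`.
-/

namespace Matrix

variable {ι R : Type*} [DecidableEq ι] [CommRing R]

theorem det_add_single_one [Fintype ι] (M : Matrix ι ι R) (i j : ι) :
    (M + single j i 1).det = M.det + M.adjugate i j := by
  have h : M + single j i 1 = M.updateRow j (M j + Pi.single i 1) := by
    ext a b
    by_cases ha : a = j
    · subst ha; simp [single_apply, Pi.single_apply, eq_comm]
    · simp [ha, Ne.symm ha]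
  rw [h, det_updateRow_add, updateRow_eq_self, adjugate_apply]

def zeroExtend (s : Finset ι) (B : Matrix s s R) : Matrix ι ι R :=
  of fun i j => if h : i ∈ s ∧ j ∈ s then B ⟨i, h.1⟩ ⟨j, h.2⟩ else 0

theorem zeroExtend_smul (s : Finset ι) (c : R) (B : Matrix s s R) :
    zeroExtend s (c • B) = c • zeroExtend s B := by
  ext i j
  by_cases h : i ∈ s ∧ j ∈ s <;> simp [zeroExtend, h]

theorem det_submatrix_add_single_one_sub (A : Matrix ι ι R) (s : Finset ι) (i j : ι) :
    ((A + single j i 1).submatrix (↑) (↑) : Matrix s s R).det -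
        (A.submatrix (↑) (↑) : Matrix s s R).det =
      zeroExtend s (A.submatrix (↑) (↑) : Matrix s s R).adjugate i j := by
  by_cases h : i ∈ s ∧ j ∈ s
  · have hsub : ((A + single j i 1).submatrix (↑) (↑) : Matrix s s R) =
        A.submatrix (↑) (↑) + single ⟨j, h.2⟩ ⟨i, h.1⟩ 1 := by
      ext a b
      simp [single_apply, Subtype.ext_iff]
    simp [hsub, det_add_single_one, zeroExtend, h]
  · have hsub : ((A + single j i 1).submatrix (↑) (↑) : Matrix s s R) =
        A.submatrix (↑) (↑) := by
      ext a b
      simp only [submatrix_apply, add_apply, single_apply, add_eq_left, ite_eq_right_iff,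
        and_imp]
      rintro rfl rfl
      exact absurd ⟨b.2, a.2⟩ h
    simp [hsub, zeroExtend, h]

variable [Fintype ι]

theorem det_add_diagonal_eq_sum (A : Matrix ι ι R) (d : ι → R) :
    (A + diagonal d).det =
      ∑ s : Finset ι, (∏ k ∈ sᶜ, d k) * (A.submatrix (↑) (↑) : Matrix s s R).det := by
  have hsplit : (A + diagonal d).det =
      ∑ s : Finset ι, detRowAlternating (s.piecewise A.row (diagonal d).row) :=
    detRowAlternating.map_add_univ A (diagonal d)
  refine hsplit.trans (Finset.sum_congr rfl fun s _ => ?_)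
  set m := s.piecewise A.row (1 : Matrix ι ι R).row
  have hrows : s.piecewise A.row (diagonal d).row = sᶜ.piecewise (fun k => d k • m k) m := by
    ext k l
    by_cases hk : k ∈ s
    · simp [m, hk]
    · simp [m, hk, diagonal_apply, one_apply]
  rw [hrows]
  refine (detRowAlternating.toMultilinearMap.map_piecewise_smul d m sᶜ).trans ?_
  rw [smul_eq_mul, ← det_piecewise_one_eq_submatrix_det A s]
  rfl

theorem adjugate_add_diagonal_eq_sum (A : Matrix ι ι R) (d : ι → R) :
    (A + diagonal d).adjugate =
      ∑ s : Finset ι,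
        (∏ k ∈ sᶜ, d k) • zeroExtend s (A.submatrix (↑) (↑) : Matrix s s R).adjugate := by
  ext i j
  have h := det_add_single_one (A + diagonal d) i j
  rw [add_right_comm, det_add_diagonal_eq_sum, det_add_diagonal_eq_sum] at h
  simp only [sum_apply, smul_apply, smul_eq_mul, ← det_submatrix_add_single_one_sub, mul_sub,
    sum_sub_distrib, h]
  ring

theorem inv_add_diagonal_eq_sum {K : Type*} [Field K] (A : Matrix ι ι K) (d : ι → K)
    (hA : ∀ s : Finset ι, (A.submatrix (↑) (↑) : Matrix s s K).det ≠ 0) :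
    (A + diagonal d)⁻¹ =
      ∑ s : Finset ι, ((∏ k ∈ sᶜ, d k) * (A.submatrix (↑) (↑) : Matrix s s K).det /
        (A + diagonal d).det) • zeroExtend s (A.submatrix (↑) (↑) : Matrix s s K)⁻¹ := by
  rw [inv_def, Ring.inverse_eq_inv', adjugate_add_diagonal_eq_sum, smul_sum]
  refine Finset.sum_congr rfl fun s _ => ?_
  rw [inv_def, Ring.inverse_eq_inv', zeroExtend_smul, smul_smul, smul_smul]
  congr 1
  field_simp [hA s]

end Matrix

theorem sampMatrix_mul_apply {n : ℕ} {m : Type*} (C : Finset (Fin n)) (M : Matrix C m ℝ)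
    (i : Fin n) (k : m) :
    (sampMatrix C * M) i k = if h : i ∈ C then M ⟨i, h⟩ k else 0 := by
  split_ifs with h
  · rw [mul_apply, Fintype.sum_eq_single ⟨i, h⟩ fun a ha => ?_]
    · simp [sampMatrix]
    · simp [sampMatrix, show i ≠ a from fun e => ha (Subtype.ext e.symm)]
  · refine Finset.sum_eq_zero fun a _ => ?_
    simp [sampMatrix, show i ≠ a from fun e => h (e ▸ a.2)]

theorem sampMatrix_mul_mul_transpose {n : ℕ} (C : Finset (Fin n)) (B : Matrix C C ℝ) :
    sampMatrix C * B * (sampMatrix C)ᵀ = zeroExtend C B := by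
  ext i j
  rw [Matrix.mul_assoc, sampMatrix_mul_apply, ← transpose_transpose (B * _), transpose_mul,
    transpose_transpose]
  by_cases hi : i ∈ C <;> by_cases hj : j ∈ C <;> simp [sampMatrix_mul_apply, zeroExtend, hi, hj]

theorem det_principalSub_smul_div_det_one_add_smul {n : ℕ} (K : Matrix (Fin n) (Fin n) ℝ)
    {α : ℝ} (hα : α ≠ 0) (C : Finset (Fin n)) :
    (principalSub (α⁻¹ • K) C).det / (1 + α⁻¹ • K).det =
      α ^ Cᶜ.card * (principalSub K C).det / (K + α • 1).det := by
  have hsub : principalSub (α⁻¹ • K) C = α⁻¹ • principalSub K C := rfl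
  have hone : 1 + α⁻¹ • K = α⁻¹ • (K + α • 1) := by
    rw [smul_add, smul_smul, inv_mul_cancel₀ hα, one_smul, add_comm]
  have hcard : Fintype.card (Fin n) = C.card + Cᶜ.card := (card_add_card_compl C).symm
  rw [hsub, hone, det_smul, det_smul, Fintype.card_coe, hcard, pow_add, mul_assoc,
    mul_div_mul_left _ _ (pow_ne_zero _ (inv_ne_zero hα)), inv_pow, div_mul_eq_div_div,
    div_inv_eq_mul, mul_comm]

theorem dpp_expected_ridgeless_predictor_general (n : ℕ) (K : Matrix (Fin n) (Fin n) ℝ)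
    (hPD : K.PosDef) (α : ℝ) (hα : 0 < α)
    (kx y : Fin n → ℝ) :
    ∑ C : Finset (Fin n),
        ((principalSub (α⁻¹ • K) C).det / (1 + α⁻¹ • K).det) *
          (kx ⬝ᵥ (sampMatrix C * (principalSub K C)⁻¹ * (sampMatrix C)ᵀ).mulVec y) =
      kx ⬝ᵥ (K + α • (1 : Matrix (Fin n) (Fin n) ℝ))⁻¹.mulVec y := by
  have hminors : ∀ C : Finset (Fin n), (K.submatrix (↑) (↑) : Matrix C C ℝ).det ≠ 0 :=
    fun C => (hPD.submatrix Subtype.val_injective).det_pos.ne'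
  have hinv : (K + α • (1 : Matrix (Fin n) (Fin n) ℝ))⁻¹ =
      ∑ C : Finset (Fin n), ((principalSub (α⁻¹ • K) C).det / (1 + α⁻¹ • K).det) •
        (sampMatrix C * (principalSub K C)⁻¹ * (sampMatrix C)ᵀ) := by
    simp only [det_principalSub_smul_div_det_one_add_smul K hα.ne', sampMatrix_mul_mul_transpose,
      smul_one_eq_diagonal, inv_add_diagonal_eq_sum K _ hminors, prod_const]
    rfl
  simp only [hinv, sum_mulVec, dotProduct_sum, smul_mulVec, dotProduct_smul, smul_eq_mul]

/-- The averaged ridgeless predictor: if each subset `C` receives probability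
`det((K/α)_{CC}) / det(I + K/α)`, then for all vectors `k_x, y`,
`E_C [k_xᵀ C K_{CC}⁻¹ Cᵀ y] = k_xᵀ (K + αI)⁻¹ y`. -/
theorem dpp_expected_ridgeless_predictor (n : ℕ) (K : Matrix (Fin n) (Fin n) ℝ)
    (hsymm : K.IsSymm) (hPD : K.PosDef) (α : ℝ) (hα : 0 < α)
    (kx y : Fin n → ℝ) :
    ∑ C : Finset (Fin n),
        ((principalSub (α⁻¹ • K) C).det / (1 + α⁻¹ • K).det) *
          (kx ⬝ᵥ (sampMatrix C * (principalSub K C)⁻¹ * (sampMatrix C)ᵀ).mulVec y) =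
      kx ⬝ᵥ (K + α • (1 : Matrix (Fin n) (Fin n) ℝ))⁻¹.mulVec y :=
  dpp_expected_ridgeless_predictor_general n K hPD α hα kx y
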